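/- arXiv:2007.09705 — 3 statements merged into one kernel-verified Lean document; each statement's English description precedes it below -/
import Mathlib

section
/- For every row i of the grid, the smallest base-3 value among the entries of that row occurs in the zeroth column: for all i and n, [G(i,0)]_3 ≤ [G(i,n)]_3. -/
abbrev Digit := Fin 3

/-- Base-3 value of a digit string (most significant digit first). -/
def val3 (w : List Digit) : ℕ := w.foldl (fun acc d => 3 * acc + d.val) 0

/-- Helper for `addTwo`, acting on the reversed (least significant digit first) string:
replace each digit `d` by `d - 1 (mod 3)` up to and including the first digit 0;
if no digit 0 occurs, a digit 0 is first prepended at the most significant end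
(and then becomes 2). -/
def addTwoAux : List Digit → List Digit
  | [] => [2]
  | d :: rest => if d = 0 then (d + 2) :: rest else (d + 2) :: addTwoAux rest

/-- Adding two in base 3/2: all digits at or to the right of the rightmost 0
(including that 0) are decreased by 1 modulo 3; if there is no 0, a 0 is first
prepended. -/
def addTwo (w : List Digit) : List Digit := (addTwoAux w.reverse).reverse

/-- Binary representation of `j` (digits 0 and 1, most significant first, no leading
zeros), with `binRep 0 = [0]`. -/
def binRep (j : ℕ) : List Digit :=
  if j = 0 then [0] else (Nat.digits 2 j).reverse.map (fun (d : ℕ) => (Fin.ofNat 3 d : Digit))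

/-- The grid: row 0 consists of the binary representations in increasing order, and
each subsequent row is obtained entrywise by adding two in base 3/2. -/
def G : ℕ → ℕ → List Digit
  | 0, j => binRep j
  | i + 1, j => addTwo (G i j)

/-!
Write a word as `w ++ [d]`. During `i` steps of `addTwo` its last digit runs through
`d, d - 1, d - 2, …` modulo 3, and the prefix `w` receives one step of `addTwo` exactly when
the last digit was nonzero. Hence the value after `i` steps is `3 v + (d + 2 i) % 3`, where `v`
is the value of `w` after `carries i d` steps. By induction on binary words, every entry of row
`i` is at least the value `orbitVal i` reached from the empty word, which is also the entry in
column 0. For the last digit `1` against `0`: either both make the same number of carries and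
`1` ends on the larger digit, or `1` makes one more carry, which gains at least `3 * 2` and loses
at most `2` in the last digit.
-/

lemma val3_append_singleton (w : List Digit) (d : Digit) :
    val3 (w ++ [d]) = 3 * val3 w + d.val := by
  simp [val3, List.foldl_append]

lemma addTwo_append_singleton (w : List Digit) (d : Digit) :
    addTwo (w ++ [d]) = if d = 0 then w ++ [2] else addTwo w ++ [d + 2] := by
  unfold addTwo
  rw [List.reverse_append]
  simp only [List.reverse_singleton, List.singleton_append, addTwoAux]
  split_ifs with hd
  · subst hd; simp
  · simp

lemma val3_add_two_le_val3_addTwo (w : List Digit) : val3 w + 2 ≤ val3 (addTwo w) := by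
  induction w using List.reverseRecOn with
  | nil => decide
  | append_singleton w d ih =>
    rw [addTwo_append_singleton]
    split_ifs with hd
    · simp [hd, val3_append_singleton]
    · have hv : (d + 2).val + 1 = d.val := by fin_cases d <;> simp_all
      rw [val3_append_singleton, val3_append_singleton]
      omega

def carries : ℕ → Digit → ℕ
  | 0, _ => 0
  | i + 1, d => carries i (d + 2) + if d = 0 then 0 else 1

lemma carries_eq (i : ℕ) (d : Digit) : carries i d = i - (i + 2 - d.val) / 3 := by
  induction i generalizing d with
  | zero => simp [carries]
  | succ i ih => fin_cases d <;> simp [carries, ih] <;> omega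

lemma iterate_addTwo_append_singleton (i : ℕ) (w : List Digit) (d : Digit) :
    addTwo^[i] (w ++ [d]) = addTwo^[carries i d] w ++ [Fin.ofNat 3 (d.val + 2 * i)] := by
  induction i generalizing w d with
  | zero => simp [carries]
  | succ i ih =>
    have hdigit : Fin.ofNat 3 ((d + 2).val + 2 * i) = Fin.ofNat 3 (d.val + 2 * (i + 1)) := by
      fin_cases d <;> ext <;> simp <;> omega
    rw [Function.iterate_succ_apply, addTwo_append_singleton]
    split_ifs with hd
    · subst hd
      rw [ih, ← hdigit]
      simp [carries]
    · rw [ih, ← Function.iterate_succ_apply, hdigit]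
      simp [carries, hd]

lemma val3_iterate_addTwo_append_singleton (i : ℕ) (w : List Digit) (d : Digit) :
    val3 (addTwo^[i] (w ++ [d])) = 3 * val3 (addTwo^[carries i d] w) + (d.val + 2 * i) % 3 := by
  rw [iterate_addTwo_append_singleton, val3_append_singleton, Fin.val_ofNat]

lemma carries_one_eq (i : ℕ) : carries i 1 = carries i 0 + if i % 3 = 1 then 1 else 0 := by
  simp only [carries_eq, Fin.val_zero, Fin.val_one]
  split_ifs <;> omega

def orbitVal (i : ℕ) : ℕ := val3 (addTwo^[i] [])

lemma orbitVal_add_two_le (i : ℕ) : orbitVal i + 2 ≤ orbitVal (i + 1) := by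
  rw [orbitVal, orbitVal, Function.iterate_succ_apply']
  exact val3_add_two_le_val3_addTwo _

lemma val3_iterate_addTwo_zero (i : ℕ) : val3 (addTwo^[i] [0]) = orbitVal i := by
  cases i with
  | zero => rfl
  | succ i =>
    rw [Function.iterate_succ_apply, show addTwo [0] = addTwo [] by decide]
    rfl

lemma val3_iterate_addTwo_singleton (i : ℕ) (d : Digit) :
    val3 (addTwo^[i] [d]) = 3 * orbitVal (carries i d) + (d.val + 2 * i) % 3 :=
  val3_iterate_addTwo_append_singleton i [] d

lemma orbitVal_le_val3_iterate_addTwo_one (i : ℕ) : orbitVal i ≤ val3 (addTwo^[i] [1]) := by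
  have hzero := val3_iterate_addTwo_singleton i 0
  rw [val3_iterate_addTwo_zero] at hzero
  rw [hzero, val3_iterate_addTwo_singleton, carries_one_eq]
  simp only [Fin.val_zero, Fin.val_one]
  split_ifs
  · have hgain := orbitVal_add_two_le (carries i 0)
    omega
  · rw [add_zero]
    omega

lemma orbitVal_le_val3_iterate_addTwo {w : List Digit} (hw : ∀ d ∈ w, d = 0 ∨ d = 1) (i : ℕ) :
    orbitVal i ≤ val3 (addTwo^[i] w) := by
  induction w using List.reverseRecOn generalizing i with
  | nil => rfl
  | append_singleton w d ih =>
    have hsingleton : orbitVal i ≤ val3 (addTwo^[i] [d]) := by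
      rcases hw d (by simp) with rfl | rfl
      · exact (val3_iterate_addTwo_zero i).ge
      · exact orbitVal_le_val3_iterate_addTwo_one i
    have hprefix := ih (fun d' hd' => hw d' (by simp [hd'])) (carries i d)
    calc orbitVal i ≤ val3 (addTwo^[i] [d]) := hsingleton
      _ = 3 * orbitVal (carries i d) + (d.val + 2 * i) % 3 := val3_iterate_addTwo_singleton i d
      _ ≤ 3 * val3 (addTwo^[carries i d] w) + (d.val + 2 * i) % 3 := by gcongr
      _ = val3 (addTwo^[i] (w ++ [d])) := (val3_iterate_addTwo_append_singleton i w d).symm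

lemma binRep_binary (n : ℕ) : ∀ d ∈ binRep n, d = 0 ∨ d = 1 := by
  unfold binRep
  split_ifs
  · simp
  · simp only [List.mem_map, List.mem_reverse]
    rintro _ ⟨b, hb, rfl⟩
    have := Nat.digits_lt_base (by norm_num) hb
    interval_cases b <;> decide

lemma G_eq_iterate (i j : ℕ) : G i j = addTwo^[i] (binRep j) := by
  induction i with
  | zero => rfl
  | succ i ih => rw [G, ih, Function.iterate_succ_apply']

/-- The smallest base-3 value in each row of the grid occurs in the zeroth column. -/
theorem zeroth_column_min (i n : ℕ) : val3 (G i 0) ≤ val3 (G i n) := by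
  rw [G_eq_iterate, G_eq_iterate, show binRep 0 = [0] from rfl, val3_iterate_addTwo_zero]
  exact orbitVal_le_val3_iterate_addTwo (binRep_binary n) i
end

section
/- Row 1 base case: for every row index i ≥ 2 and every column n, there exist columns p and q such that [G(1,p)]_3 < [G(1,q)]_3 < [G(i,n)]_3 and [G(1,p)]_3 + [G(i,n)]_3 = 2·[G(1,q)]_3; that is, every entry of any row below row 1, interpreted in base 3, is the last term of a nondegenerate three-term arithmetic progression whose first two terms are entries of row 1 interpreted in base 3. -/
/- ### auxiliary development -/

inductive IsS : ℕ → Prop where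
  | zero : IsS 0
  | d0 {z : ℕ} : IsS z → IsS (3*z)
  | d1 {z : ℕ} : IsS z → IsS (3*z+1)

def IsT (x : ℕ) : Prop := ∃ z t, IsS z ∧ x = z * 3^(t+1) + 2 * 3^t

lemma isS_one : IsS 1 := by simpa using IsS.d1 IsS.zero

lemma isS_three : IsS 3 := by simpa using IsS.d0 isS_one

lemma isS_div (b : ℕ) (hb : IsS b) : IsS (b/3) ∧ b % 3 ≤ 1 := by
  cases hb with
  | zero => exact ⟨IsS.zero, by omega⟩
  | @d0 z hz => refine ⟨?_, by omega⟩; simpa [Nat.mul_div_cancel_left z (by norm_num : 0 < 3)] using hz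
  | @d1 z hz =>
      constructor
      · have : (3*z+1)/3 = z := by omega
        rw [this]; exact hz
      · omega

lemma isS_glue {a : ℕ} (ha : IsS a) : ∀ L b, IsS b → b < 3^L → IsS (a * 3^L + b) := by
  intro L
  induction L with
  | zero => intro b _ hlt; interval_cases b; simpa using ha
  | succ L IH =>
      intro b hb hlt
      obtain ⟨hb3, hm⟩ := isS_div b hb
      have h3 : (3:ℕ)^(L+1) = 3 * 3^L := by rw [pow_succ]; ring
      have hb' : b/3 < 3^L := by omega
      have h1 : IsS (a * 3^L + b/3) := IH _ hb3 hb'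
      have hmul : a*3^(L+1) = 3*(a*3^L) := by rw [h3]; ring
      have he : a*3^(L+1) + b = 3*(a*3^L + b/3) + b%3 := by omega
      rw [he]
      rcases (by omega : b % 3 = 0 ∨ b % 3 = 1) with h | h
      · rw [h]; simpa using IsS.d0 h1
      · rw [h]; exact IsS.d1 h1

lemma isT_glue {U x M : ℕ} (hU : IsS U) (hx : IsT x) (hlt : x < 3^M) :
    IsT (U * 3^M + x) := by
  obtain ⟨z, t, hz, rfl⟩ := hx
  have h2t : 2 * 3^t < 3^M := by
    have : z * 3^(t+1) + 2*3^t < 3^M := hlt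
    omega
  have htM : t + 1 ≤ M := by
    by_contra h
    have hMt : M ≤ t := by omega
    have := pow_le_pow_right₀ (by norm_num : (1:ℕ) ≤ 3) hMt
    have h3 : (0:ℕ) < 3^t := pow_pos (by norm_num) t
    omega
  obtain ⟨L, rfl⟩ : ∃ L, M = L + (t+1) := ⟨M - (t+1), by omega⟩
  have hsplit : (3:ℕ)^(L+(t+1)) = 3^L * 3^(t+1) := by rw [pow_add]
  have hzlt : z < 3^L := by
    by_contra h
    have h1 : 3^L * 3^(t+1) ≤ z * 3^(t+1) :=
      Nat.mul_le_mul_right _ (by omega)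
    omega
  refine ⟨U * 3^L + z, t, isS_glue hU L z hz hzlt, ?_⟩
  rw [hsplit]; ring

lemma isT_std {z : ℕ} (t : ℕ) (hz : IsS z) : IsT (z * 3^(t+1) + 2 * 3^t) := ⟨z, t, hz, rfl⟩

lemma isT2 (k : ℕ) : IsT (2 * 3^k) := ⟨0, k, IsS.zero, by ring⟩
lemma isT5 (k : ℕ) : IsT (5 * 3^k) := ⟨1, k, isS_one, by rw [pow_succ]; ring⟩
lemma isT6 (k : ℕ) : IsT (6 * 3^k) := ⟨0, k+1, IsS.zero, by rw [pow_succ]; ring⟩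
lemma isT11 (k : ℕ) : IsT (11 * 3^k) := ⟨3, k, isS_three, by rw [pow_succ]; ring⟩
lemma isT15 (k : ℕ) : IsT (15 * 3^k) := ⟨1, k+1, isS_one, by rw [pow_succ, pow_succ]; ring⟩

lemma isT_lead1 {y m : ℕ} (hy : IsT y) (h : y < 3^m) : IsT (3^m + y) := by
  have := isT_glue isS_one hy h
  simpa using this

lemma lemA : ∀ m C : ℕ, 1 ≤ C → C < 3^m → 3*C ≠ 3^m → 9*C ≠ 3^m →
    ∃ x y, IsT x ∧ IsT y ∧ x < 3^m ∧ y < 3^m ∧ C + x = 2*y := by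
  intro m
  induction m with
  | zero => intro C h1 h2 _ _; simp at h2; omega
  | succ m IH =>
      intro C h1 h2 h3 h4
      have hP : 0 < (3:ℕ)^m := pow_pos (by norm_num) m
      have hpow : (3:ℕ)^(m+1) = 3 * 3^m := by rw [pow_succ]; ring
      by_cases hsm : C < 3^m
      · by_cases h9 : 9*C = 3^m
        · -- C = 3^k, m = k+2
          obtain ⟨k, rfl⟩ : ∃ k, m = k + 2 := by
            rcases m with _ | _ | m
            · have hz0 := pow_zero (3:ℕ); omega
            · have hz1 := pow_one (3:ℕ); omega
            · exact ⟨m, rfl⟩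
          have hCk : C = 3^k := by
            have : (3:ℕ)^(k+2) = 9 * 3^k := by rw [pow_succ, pow_succ]; ring
            omega
          subst hCk
          refine ⟨11 * 3^k, 6 * 3^k, isT11 k, isT6 k, ?_, ?_, by ring⟩
          · have : (3:ℕ)^(k+2+1) = 27 * 3^k := by rw [pow_succ, pow_succ, pow_succ]; ring
            have hk : 0 < (3:ℕ)^k := pow_pos (by norm_num) k
            omega
          · have : (3:ℕ)^(k+2+1) = 27 * 3^k := by rw [pow_succ, pow_succ, pow_succ]; ring
            have hk : 0 < (3:ℕ)^k := pow_pos (by norm_num) k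
            omega
        · have h3m : 3*C ≠ 3^m := by omega
          obtain ⟨x, y, hx, hy, hxl, hyl, hs⟩ := IH C h1 hsm h3m h9
          exact ⟨x, y, hx, hy, by omega, by omega, hs⟩
      · -- 3^m ≤ C
        push_neg at hsm
        by_cases h2m : C < 2*3^m
        · -- C = 3^m + C0, 1 ≤ C0 < 3^m
          set C0 := C - 3^m with hC0
          have hC0lt : C0 < 3^m := by omega
          have hC0pos : 1 ≤ C0 := by
            rcases Nat.eq_zero_or_pos C0 with h | h
            · exfalso; apply h3; omega
            · exact h
          by_cases hc3 : 3*C0 = 3^m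
          · obtain ⟨k, rfl⟩ : ∃ k, m = k + 1 := by
              rcases m with _ | m
              · have hz0 := pow_zero (3:ℕ); omega
              · exact ⟨m, rfl⟩
            have hps : (3:ℕ)^(k+1) = 3 * 3^k := by rw [pow_succ]; ring
            have hCk : C0 = 3^k := by omega
            have hk : 0 < (3:ℕ)^k := pow_pos (by norm_num) k
            have hC : C = 4 * 3^k := by omega
            refine ⟨6 * 3^k, 5 * 3^k, isT6 k, isT5 k, ?_, ?_, by omega⟩
            · have : (3:ℕ)^(k+1+1) = 9 * 3^k := by rw [pow_succ, pow_succ]; ring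
              omega
            · have : (3:ℕ)^(k+1+1) = 9 * 3^k := by rw [pow_succ, pow_succ]; ring
              omega
          · by_cases hc9 : 9*C0 = 3^m
            · obtain ⟨k, rfl⟩ : ∃ k, m = k + 2 := by
                rcases m with _ | _ | m
                · have hz0 := pow_zero (3:ℕ); omega
                · have hz1 := pow_one (3:ℕ); omega
                · exact ⟨m, rfl⟩
              have hps : (3:ℕ)^(k+2) = 9 * 3^k := by rw [pow_succ, pow_succ]; ring
              have hk : 0 < (3:ℕ)^k := pow_pos (by norm_num) k
              have hCk : C0 = 3^k := by omega
              have hC : C = 10 * 3^k := by omega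
              refine ⟨2 * 3^k, 6 * 3^k, isT2 k, isT6 k, ?_, ?_, by omega⟩
              · have : (3:ℕ)^(k+2+1) = 27 * 3^k := by rw [pow_succ, pow_succ, pow_succ]; ring
                omega
              · have : (3:ℕ)^(k+2+1) = 27 * 3^k := by rw [pow_succ, pow_succ, pow_succ]; ring
                omega
            · obtain ⟨x0, y0, hx0, hy0, hx0l, hy0l, hs0⟩ := IH C0 hC0pos hC0lt hc3 hc9
              refine ⟨3^m + x0, 3^m + y0, isT_lead1 hx0 hx0l, isT_lead1 hy0 hy0l,
                by omega, by omega, by omega⟩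
        · -- 2*3^m ≤ C < 3^(m+1)
          push_neg at h2m
          set C0 := C - 2*3^m with hC0
          have hC0lt : C0 < 3^m := by omega
          rcases Nat.eq_zero_or_pos C0 with hz | hC0pos
          · have hC : C = 2 * 3^m := by omega
            exact ⟨C, C, by rw [hC]; exact isT2 m, by rw [hC]; exact isT2 m,
              by omega, by omega, by omega⟩
          · by_cases hc3 : 3*C0 = 3^m
            · obtain ⟨k, rfl⟩ : ∃ k, m = k + 1 := by
                rcases m with _ | m
                · have hz0 := pow_zero (3:ℕ); omega
                · exact ⟨m, rfl⟩
              have hps : (3:ℕ)^(k+1) = 3 * 3^k := by rw [pow_succ]; ring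
              have hk : 0 < (3:ℕ)^k := pow_pos (by norm_num) k
              have hCk : C0 = 3^k := by omega
              have hC : C = 7 * 3^k := by omega
              refine ⟨5 * 3^k, 6 * 3^k, isT5 k, isT6 k, ?_, ?_, by omega⟩
              · have : (3:ℕ)^(k+1+1) = 9 * 3^k := by rw [pow_succ, pow_succ]; ring
                omega
              · have : (3:ℕ)^(k+1+1) = 9 * 3^k := by rw [pow_succ, pow_succ]; ring
                omega
            · by_cases hc9 : 9*C0 = 3^m
              · obtain ⟨k, rfl⟩ : ∃ k, m = k + 2 := by
                  rcases m with _ | _ | m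
                  · have hz0 := pow_zero (3:ℕ); omega
                  · have hz1 := pow_one (3:ℕ); omega
                  · exact ⟨m, rfl⟩
                have hps : (3:ℕ)^(k+2) = 9 * 3^k := by rw [pow_succ, pow_succ]; ring
                have hk : 0 < (3:ℕ)^k := pow_pos (by norm_num) k
                have hCk : C0 = 3^k := by omega
                have hC : C = 19 * 3^k := by omega
                refine ⟨11 * 3^k, 15 * 3^k, isT11 k, isT15 k, ?_, ?_, by omega⟩
                · have : (3:ℕ)^(k+2+1) = 27 * 3^k := by rw [pow_succ, pow_succ, pow_succ]; ring
                  omega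
                · have : (3:ℕ)^(k+2+1) = 27 * 3^k := by rw [pow_succ, pow_succ, pow_succ]; ring
                  omega
              · obtain ⟨x0, y0, hx0, hy0, hx0l, hy0l, hs0⟩ := IH C0 hC0pos hC0lt hc3 hc9
                refine ⟨x0, 3^m + y0, hx0, isT_lead1 hy0 hy0l, by omega, by omega, by omega⟩

lemma core (m C : ℕ) (h1 : 1 ≤ C) (h2 : C < 3^m) :
    ∃ x y, IsT x ∧ IsT y ∧ x < y ∧ y < 2*3^m + C ∧ x + (2*3^m + C) = 2*y := by
  have hP : 0 < (3:ℕ)^m := pow_pos (by norm_num) m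
  by_cases h3 : 3*C = 3^m
  · obtain ⟨k, rfl⟩ : ∃ k, m = k + 1 := by
      rcases m with _ | m
      · have hz0 := pow_zero (3:ℕ); omega
      · exact ⟨m, rfl⟩
    have hps : (3:ℕ)^(k+1) = 3 * 3^k := by rw [pow_succ]; ring
    have hk : 0 < (3:ℕ)^k := pow_pos (by norm_num) k
    have hC : C = 3^k := by omega
    exact ⟨5 * 3^k, 6 * 3^k, isT5 k, isT6 k, by omega, by omega, by omega⟩
  · by_cases h9 : 9*C = 3^m
    · obtain ⟨k, rfl⟩ : ∃ k, m = k + 2 := by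
        rcases m with _ | _ | m
        · have hz0 := pow_zero (3:ℕ); omega
        · have hz1 := pow_one (3:ℕ); omega
        · exact ⟨m, rfl⟩
      have hps : (3:ℕ)^(k+2) = 9 * 3^k := by rw [pow_succ, pow_succ]; ring
      have hk : 0 < (3:ℕ)^k := pow_pos (by norm_num) k
      have hC : C = 3^k := by omega
      exact ⟨11 * 3^k, 15 * 3^k, isT11 k, isT15 k, by omega, by omega, by omega⟩
    · obtain ⟨x, y, hx, hy, hxl, hyl, hs⟩ := lemA m C h1 h2 h3 h9
      exact ⟨x, 3^m + y, hx, isT_lead1 hy hyl, by omega, by omega, by omega⟩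

lemma val3_shift (b : List Digit) : ∀ acc : ℕ,
    b.foldl (fun acc d => 3 * acc + d.val) acc = acc * 3^b.length + val3 b := by
  induction b with
  | nil => intro acc; simp [val3]
  | cons d b IH =>
      intro acc
      have h1 : val3 (d :: b) = (d.val : ℕ) * 3^b.length + val3 b := by
        show List.foldl _ (3*0 + d.val) b = _
        rw [IH]; simp
      show List.foldl _ (3*acc + d.val) b = _
      rw [IH, h1]
      simp [List.length_cons, pow_succ]; ring

lemma val3_append (a b : List Digit) :
    val3 (a ++ b) = val3 a * 3^b.length + val3 b := by
  unfold val3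
  rw [List.foldl_append]
  exact val3_shift b _

lemma val3_cons (d : Digit) (w : List Digit) :
    val3 (d :: w) = d.val * 3^w.length + val3 w := by
  show List.foldl _ (3*0 + d.val) w = _
  rw [val3_shift]; simp

lemma val3_lt (w : List Digit) : val3 w < 3^w.length := by
  induction w with
  | nil => simp [val3]
  | cons d w IH =>
      rw [val3_cons]
      have hd : d.val ≤ 2 := by omega
      have h3 : (3:ℕ)^(d::w).length = 3 * 3^w.length := by
        simp [List.length_cons, pow_succ]; ring
      rw [h3]
      have := pow_pos (by norm_num : (0:ℕ) < 3) w.length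
      nlinarith

lemma val3_pos (c : List Digit) (h : ∃ d ∈ c, d ≠ 0) : 1 ≤ val3 c := by
  induction c with
  | nil => simp at h
  | cons d c IH =>
      obtain ⟨e, he, hne⟩ := h
      rw [val3_cons]
      rcases List.mem_cons.mp he with rfl | hmem
      · have : 1 ≤ e.val := by
          have : e.val ≠ 0 := fun hc => hne (Fin.ext hc)
          omega
        have := pow_pos (by norm_num : (0:ℕ) < 3) c.length
        nlinarith
      · have := IH ⟨e, hmem, hne⟩
        omega

lemma isS_val3 (u : List Digit) (h : ∀ d ∈ u, d ≠ 2) : IsS (val3 u) := by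
  induction u using List.reverseRecOn with
  | nil => exact IsS.zero
  | append_singleton l d IH =>
      rw [val3_append]
      have hd2 : d ≠ 2 := h d (by simp)
      have hl : IsS (val3 l) := IH (fun e he => h e (by simp [he]))
      have hv1 : val3 [d] = d.val := by simp [val3]
      have hdv : d.val = 0 ∨ d.val = 1 := by
        have h3 : d.val < 3 := d.isLt
        have : d.val ≠ 2 := fun hc => hd2 (Fin.ext hc)
        omega
      rcases hdv with h0 | h0 <;> rw [hv1, h0] <;> simp [pow_one]
      · simpa [Nat.mul_comm] using IsS.d0 hl
      · have := IsS.d1 hl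
        simpa [Nat.mul_comm] using this

lemma aux_has_two : ∀ l : List Digit, ∃ a c, addTwoAux l = a ++ (2:Digit) :: c := by
  intro l
  induction l with
  | nil => exact ⟨[], [], rfl⟩
  | cons d rest IH =>
      by_cases hd : d = 0
      · subst hd
        exact ⟨[], rest, by simp [addTwoAux]⟩
      · obtain ⟨a, c, h⟩ := IH
        exact ⟨(d+2) :: a, c, by simp [addTwoAux, hd, h]⟩

lemma goodR : ∀ l : List Digit, ∃ (a : List Digit) (d : Digit) (b c : List Digit),
    addTwoAux (addTwoAux l) = a ++ d :: (b ++ (2:Digit) :: c) ∧ d ≠ 0 := by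
  intro l
  induction l with
  | nil => exact ⟨[], 1, [], [], rfl, by decide⟩
  | cons d rest IH =>
      fin_cases d
      · -- d = 0 : result = 1 :: addTwoAux rest
        obtain ⟨a, c, h⟩ := aux_has_two rest
        refine ⟨[], 1, a, c, ?_, by decide⟩
        show addTwoAux (addTwoAux ((0:Digit) :: rest)) = _
        have h1 : addTwoAux ((0:Digit) :: rest) = (2:Digit) :: rest := by
          simp [addTwoAux]
        rw [h1]
        have h2 : addTwoAux ((2:Digit) :: rest) = (1:Digit) :: addTwoAux rest := by
          simp [addTwoAux]
        rw [h2, h]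
        simp
      · -- d = 1 : result = 2 :: addTwoAux rest
        obtain ⟨a, c, h⟩ := aux_has_two rest
        refine ⟨[], 2, a, c, ?_, by decide⟩
        show addTwoAux (addTwoAux ((1:Digit) :: rest)) = _
        have h1 : addTwoAux ((1:Digit) :: rest) = (0:Digit) :: addTwoAux rest := by
          simp [addTwoAux]
        rw [h1]
        have h2 : addTwoAux ((0:Digit) :: addTwoAux rest) = (2:Digit) :: addTwoAux rest := by
          simp [addTwoAux]
        rw [h2, h]
        simp
      · -- d = 2 : result = 0 :: addTwoAux (addTwoAux rest)
        obtain ⟨a, e, b, c, h, he⟩ := IH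
        refine ⟨(0:Digit) :: a, e, b, c, ?_, he⟩
        show addTwoAux (addTwoAux ((2:Digit) :: rest)) = _
        have h1 : addTwoAux ((2:Digit) :: rest) = (1:Digit) :: addTwoAux rest := by
          simp [addTwoAux]
        have h2 : addTwoAux ((1:Digit) :: addTwoAux rest) =
            (0:Digit) :: addTwoAux (addTwoAux rest) := by
          simp [addTwoAux]
        rw [h1, h2, h]
        simp

lemma leftmost : ∀ w u c : List Digit, w = u ++ (2:Digit) :: c → (∃ d ∈ c, d ≠ 0) →
    ∃ u' c', w = u' ++ (2:Digit) :: c' ∧ (∀ e ∈ u', e ≠ 2) ∧ ∃ d ∈ c', d ≠ 0 := by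
  intro w
  induction w with
  | nil =>
      intro u c h _
      exact absurd h (by simp)
  | cons x w' IH =>
      intro u c h hd
      cases u with
      | nil =>
          simp only [List.nil_append, List.cons.injEq] at h
          exact ⟨[], c, by simp [h.1, h.2], by simp, hd⟩
      | cons x0 u' =>
          simp only [List.cons_append, List.cons.injEq] at h
          obtain ⟨rfl, hw'⟩ := h
          by_cases hx : x = 2
          · refine ⟨[], w', by simp [hx], by simp, ?_⟩
            obtain ⟨d, hdc, hdn⟩ := hd
            exact ⟨d, by rw [hw']; simp [hdc], hdn⟩
          · obtain ⟨u'', c'', h1, h2, h3⟩ := IH u' c hw' hd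
            refine ⟨x :: u'', c'', by simp [h1], ?_, h3⟩
            intro e he
            rcases List.mem_cons.mp he with rfl | hmem
            · exact hx
            · exact h2 e hmem

lemma G_succ (i j : ℕ) : G (i+1) j = addTwo (G i j) := rfl

lemma binRep_bit (j : ℕ) (hj : 1 ≤ j) (d : ℕ) (hd : d < 2) :
    binRep (2*j + d) = binRep j ++ [(Fin.ofNat 3 d : Digit)] := by
  have h1 : 2*j + d ≠ 0 := by omega
  have h2 : j ≠ 0 := by omega
  unfold binRep
  rw [if_neg h1, if_neg h2]
  rw [Nat.digits_def' (by norm_num : (1:ℕ) < 2) (by omega : 0 < 2*j+d)]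
  have hm : (2*j+d) % 2 = d := by omega
  have hdv : (2*j+d) / 2 = j := by omega
  rw [hm, hdv]
  simp

lemma binRep_one : binRep 1 = [(1 : Digit)] := by
  unfold binRep
  norm_num
  rfl

lemma addTwo_append_zero (u : List Digit) : addTwo (u ++ [(0:Digit)]) = u ++ [(2:Digit)] := by
  unfold addTwo
  rw [List.reverse_append]
  show (addTwoAux ((0:Digit) :: u.reverse)).reverse = _
  have h : addTwoAux ((0:Digit) :: u.reverse) = (2:Digit) :: u.reverse := by
    simp [addTwoAux]
  rw [h]
  simp

lemma addTwo_append_one (u : List Digit) : addTwo (u ++ [(1:Digit)]) = addTwo u ++ [(0:Digit)] := by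
  unfold addTwo
  rw [List.reverse_append]
  show (addTwoAux ((1:Digit) :: u.reverse)).reverse = _
  have h : addTwoAux ((1:Digit) :: u.reverse) = (0:Digit) :: addTwoAux u.reverse := by
    simp [addTwoAux]
  rw [h]
  simp

lemma row1_double (j : ℕ) : val3 (G 1 (2*j)) = 3 * val3 (binRep j) + 2 := by
  rcases Nat.eq_zero_or_pos j with rfl | hj
  · show val3 (addTwo (binRep 0)) = _
    simp [binRep, addTwo, addTwoAux, val3]
  · show val3 (addTwo (binRep (2*j))) = _
    have : (2*j : ℕ) = 2*j + 0 := by ring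
    rw [this, binRep_bit j hj 0 (by norm_num)]
    have h0 : (Fin.ofNat 3 0 : Digit) = (0 : Digit) := rfl
    rw [h0, addTwo_append_zero, val3_append]
    simp [val3]
    ring

lemma row1_odd (p : ℕ) : val3 (G 1 (2*p+1)) = 3 * val3 (G 1 p) := by
  rcases Nat.eq_zero_or_pos p with rfl | hp
  · show val3 (addTwo (binRep 1)) = 3 * val3 (addTwo (binRep 0))
    rw [binRep_one]
    simp [binRep, addTwo, addTwoAux, val3]
  · show val3 (addTwo (binRep (2*p+1))) = 3 * val3 (addTwo (binRep p))
    rw [binRep_bit p hp 1 (by norm_num)]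
    have h1 : (Fin.ofNat 3 1 : Digit) = (1 : Digit) := rfl
    rw [h1, addTwo_append_one, val3_append]
    simp [val3]
    ring

lemma binRep_realize (z : ℕ) (hz : IsS z) : ∃ j, val3 (binRep j) = z := by
  induction hz with
  | zero => exact ⟨0, by simp [binRep, val3]⟩
  | @d0 z hz IH =>
      obtain ⟨j, hj⟩ := IH
      rcases Nat.eq_zero_or_pos z with rfl | hzp
      · exact ⟨0, by simp [binRep, val3]⟩
      · have hjp : 1 ≤ j := by
          rcases Nat.eq_zero_or_pos j with rfl | h
          · simp [binRep, val3] at hj; omega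
          · exact h
        refine ⟨2*j, ?_⟩
        have : (2*j : ℕ) = 2*j + 0 := by ring
        rw [this, binRep_bit j hjp 0 (by norm_num)]
        rw [val3_append, hj]
        simp [val3]
        ring
  | @d1 z hz IH =>
      obtain ⟨j, hj⟩ := IH
      rcases Nat.eq_zero_or_pos z with rfl | hzp
      · exact ⟨1, by rw [binRep_one]; simp [val3]⟩
      · have hjp : 1 ≤ j := by
          rcases Nat.eq_zero_or_pos j with rfl | h
          · simp [binRep, val3] at hj; omega
          · exact h
        refine ⟨2*j+1, ?_⟩
        rw [binRep_bit j hjp 1 (by norm_num)]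
        rw [val3_append, hj]
        simp [val3]
        ring

lemma row1_realize (x : ℕ) (hx : IsT x) : ∃ p, val3 (G 1 p) = x := by
  obtain ⟨z, t, hz, rfl⟩ := hx
  obtain ⟨j, hj⟩ := binRep_realize z hz
  clear hz
  induction t with
  | zero =>
      refine ⟨2*j, ?_⟩
      rw [row1_double, hj]
      simp [pow_one]
      ring
  | succ t IH =>
      obtain ⟨p, hp⟩ := IH
      refine ⟨2*p+1, ?_⟩
      rw [row1_odd, hp]
      rw [pow_succ, pow_succ]
      ring

/-- Every entry of any row below row 1, interpreted in base 3, is the last term of a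
nondegenerate three-term arithmetic progression whose first two terms are entries of
row 1 interpreted in base 3. -/
theorem row_one_base_case (i n : ℕ) (hi : 2 ≤ i) :
    ∃ p q : ℕ,
      val3 (G 1 p) < val3 (G 1 q) ∧ val3 (G 1 q) < val3 (G i n) ∧
      val3 (G 1 p) + val3 (G i n) = 2 * val3 (G 1 q) := by
  obtain ⟨k, rfl⟩ : ∃ k, i = k + 2 := ⟨i - 2, by omega⟩
  -- structure of G (k+2) n
  have hw : G (k+2) n = (addTwoAux (addTwoAux (G k n).reverse)).reverse := by
    rw [G_succ, G_succ]
    unfold addTwo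
    rw [List.reverse_reverse]
  obtain ⟨a, d, b, c, hstruct, hdne⟩ := goodR (G k n).reverse
  -- reversed: G (k+2) n = c.reverse ++ 2 :: (b.reverse ++ d :: a.reverse)
  have hw2 : G (k+2) n = c.reverse ++ (2:Digit) :: (b.reverse ++ d :: a.reverse) := by
    rw [hw, hstruct]
    simp
  obtain ⟨u, c', hsplit, hu, hnz⟩ := leftmost (G (k+2) n) _ _ hw2
    ⟨d, by simp, hdne⟩
  -- value decomposition
  set m := c'.length with hm
  set U := val3 u with hU
  set C := val3 c' with hC
  have hUS : IsS U := isS_val3 u hu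
  have hC1 : 1 ≤ C := val3_pos c' hnz
  have hClt : C < 3^m := val3_lt c'
  have hval : val3 (G (k+2) n) = U * 3^(m+1) + (2*3^m + C) := by
    rw [hsplit, val3_append, val3_cons]
    simp only [List.length_cons]
    rfl
  obtain ⟨x, y, hxT, hyT, hxy, hyV, hsum⟩ := core m C hC1 hClt
  have hpow : (3:ℕ)^(m+1) = 3 * 3^m := by rw [pow_succ]; ring
  have hxlt : x < 3^(m+1) := by omega
  have hylt : y < 3^(m+1) := by omega
  have hXT : IsT (U * 3^(m+1) + x) := isT_glue hUS hxT hxlt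
  have hYT : IsT (U * 3^(m+1) + y) := isT_glue hUS hyT hylt
  obtain ⟨p, hp⟩ := row1_realize _ hXT
  obtain ⟨q, hq⟩ := row1_realize _ hYT
  refine ⟨p, q, ?_, ?_, ?_⟩ <;> simp only [hp, hq, hval] <;> omega
end

section
/- For every natural number i, the set of base-3/2 values of the entries of row i of the grid is a 3-free set of rational numbers: there are no columns p, q, r with [G(i,p)]_{3/2} < [G(i,q)]_{3/2} < [G(i,r)]_{3/2} and [G(i,p)]_{3/2} + [G(i,r)]_{3/2} = 2·[G(i,q)]_{3/2}. -/
/-- Base-3/2 value of a digit string (most significant digit first):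
`[a_n ... a_1 a_0]_{3/2} = Σ a_i (3/2)^i`. -/
def val32 (w : List Digit) : ℚ := w.foldl (fun acc d => (3 / 2 : ℚ) * acc + d.val) 0

/-! Adding two in base 3/2 adds 2 to the value, so row `i` of the grid is row `0` shifted by `2 i`,
and row `0` consists of the binary strings read in base 3/2. If `x + z = 2 y` for three such
values, the digitwise sums `x_k + z_k` and `2 y_k` are expansions of the same number with digits
in `{0, 1, 2}`. These expansions are unique: after clearing the denominator `2 ^ n`, the lowest
digit is determined modulo 3. Hence `x_k + z_k = 2 y_k`, which for bits forces `x_k = z_k`,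
so `x = z`. -/

open Finset

lemma val32_eq_ofDigits (w : List Digit) :
    val32 w = Nat.ofDigits (3 / 2 : ℚ) (w.reverse.map Fin.val) := by
  induction w using List.reverseRecOn with
  | nil => rfl
  | append_singleton w d ih =>
    simp only [val32, List.foldl_append, List.foldl_cons, List.foldl_nil] at ih ⊢
    rw [ih, List.reverse_append]
    simp only [List.reverse_singleton, List.singleton_append, List.map_cons, Nat.ofDigits]
    ring

lemma ofDigits_addTwoAux (l : List Digit) :
    Nat.ofDigits (3 / 2 : ℚ) ((addTwoAux l).map Fin.val)
      = Nat.ofDigits (3 / 2 : ℚ) (l.map Fin.val) + 2 := by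
  induction l with
  | nil => simp [addTwoAux, Nat.ofDigits]
  | cons d l ih =>
    fin_cases d <;> simp [addTwoAux, Nat.ofDigits, ih] <;> ring

lemma val32_addTwo (w : List Digit) : val32 (addTwo w) = val32 w + 2 := by
  rw [val32_eq_ofDigits, val32_eq_ofDigits, addTwo, List.reverse_reverse, ofDigits_addTwoAux]

lemma val32_G (i j : ℕ) : val32 (G i j) = val32 (binRep j) + 2 * i := by
  induction i with
  | zero => simp [G]
  | succ i ih => rw [G, val32_addTwo, ih]; push_cast; ring

lemma val32_binRep (j : ℕ) : val32 (binRep j) = Nat.ofDigits (3 / 2 : ℚ) (Nat.digits 2 j) := by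
  rcases eq_or_ne j 0 with rfl | hj
  · simp [binRep, val32, Nat.ofDigits]
  rw [binRep, if_neg hj, val32_eq_ofDigits, ← List.map_reverse, List.reverse_reverse,
    List.map_map]
  conv_rhs => rw [← List.map_id (Nat.digits 2 j)]
  congr 1
  refine List.map_congr_left fun d hd => ?_
  have : d < 2 := Nat.digits_lt_base one_lt_two hd
  simp only [Function.comp_apply, Fin.ofNat_eq_cast, Fin.val_natCast, id_eq]
  omega

lemma sum_range_succ_mul_pow {α : Type*} [CommSemiring α] (a : ℕ → ℕ) (b : α) (n : ℕ) :
    ∑ k ∈ range (n + 1), (a k : α) * b ^ k = a 0 + b * ∑ k ∈ range n, (a (k + 1) : α) * b ^ k := by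
  rw [sum_range_succ', mul_sum, add_comm]
  simp only [pow_succ, pow_zero, mul_one]
  congr 1
  exact sum_congr rfl fun k _ => by ring

lemma ofDigits_eq_sum_getD {α : Type*} [CommSemiring α] (b : α) (L : List ℕ) {n : ℕ}
    (hn : L.length ≤ n) : Nat.ofDigits b L = ∑ k ∈ range n, (L.getD k 0 : α) * b ^ k := by
  induction L generalizing n with
  | nil => simp [Nat.ofDigits]
  | cons d L ih =>
    obtain ⟨m, rfl⟩ : ∃ m, n = m + 1 := ⟨n - 1, by rw [List.length_cons] at hn; omega⟩
    rw [sum_range_succ_mul_pow, Nat.ofDigits, ih (by simpa using hn)]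
    simp

lemma List.getD_le_of_forall_le {L : List ℕ} {c : ℕ} (h : ∀ d ∈ L, d ≤ c) (k : ℕ) :
    L.getD k 0 ≤ c := by
  rw [List.getD_eq_getElem?_getD]
  cases hk : L[k]? with
  | none => simp
  | some d => exact h d (List.mem_of_getElem? hk)

lemma exists_int_eq_two_pow_mul_sum (a : ℕ → ℕ) (n : ℕ) :
    ∃ z : ℤ, (2 : ℚ) ^ n * ∑ k ∈ range n, (a k : ℚ) * (3 / 2) ^ k = z := by
  induction n generalizing a with
  | zero => exact ⟨0, by simp⟩
  | succ n ih =>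
    obtain ⟨z, hz⟩ := ih fun k => a (k + 1)
    refine ⟨2 ^ (n + 1) * a 0 + 3 * z, ?_⟩
    rw [sum_range_succ_mul_pow]
    push_cast
    rw [← hz]
    ring

lemma eq_of_sum_mul_three_halves_pow_eq {n : ℕ} {a b : ℕ → ℕ} (ha : ∀ k, a k < 3)
    (hb : ∀ k, b k < 3)
    (h : ∑ k ∈ range n, (a k : ℚ) * (3 / 2) ^ k = ∑ k ∈ range n, (b k : ℚ) * (3 / 2) ^ k) :
    ∀ k < n, a k = b k := by
  induction n generalizing a b with
  | zero => simp
  | succ n ih =>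
    rw [sum_range_succ_mul_pow, sum_range_succ_mul_pow] at h
    obtain ⟨za, hza⟩ := exists_int_eq_two_pow_mul_sum (fun k => a (k + 1)) n
    obtain ⟨zb, hzb⟩ := exists_int_eq_two_pow_mul_sum (fun k => b (k + 1)) n
    have hdiv : (3 : ℤ) ∣ 2 ^ (n + 1) * ((a 0 : ℤ) - b 0) := by
      refine ⟨zb - za, ?_⟩
      have : (2 : ℚ) ^ (n + 1) * ((a 0 : ℚ) - b 0) = 3 * (zb - za) := by
        rw [← hza, ← hzb]; linear_combination (2 : ℚ) ^ (n + 1) * h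
      exact_mod_cast this
    have h3 : (3 : ℤ) ∣ (a 0 : ℤ) - b 0 :=
      (IsCoprime.pow_right (by norm_num : IsCoprime (3 : ℤ) 2)).dvd_of_dvd_mul_left hdiv
    have h0 : a 0 = b 0 := by have := ha 0; have := hb 0; omega
    have htail := ih (fun k => ha (k + 1)) (fun k => hb (k + 1)) (by
      rw [h0] at h
      simpa using h)
    rintro (_ | k) hk
    · exact h0
    · exact htail k (by omega)

lemma ofDigits_three_halves_eq_of_add_eq_two_mul {L M N : List ℕ} (hL : ∀ d ∈ L, d ≤ 1)
    (hM : ∀ d ∈ M, d ≤ 1) (hN : ∀ d ∈ N, d ≤ 1)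
    (h : Nat.ofDigits (3 / 2 : ℚ) L + Nat.ofDigits (3 / 2 : ℚ) N
      = 2 * Nat.ofDigits (3 / 2 : ℚ) M) :
    Nat.ofDigits (3 / 2 : ℚ) L = Nat.ofDigits (3 / 2 : ℚ) N := by
  set n := L.length + M.length + N.length
  simp only [ofDigits_eq_sum_getD _ L (show L.length ≤ n by omega),
    ofDigits_eq_sum_getD _ M (show M.length ≤ n by omega),
    ofDigits_eq_sum_getD _ N (show N.length ≤ n by omega)] at h ⊢
  have hdigits := eq_of_sum_mul_three_halves_pow_eq (n := n)
    (a := fun k => L.getD k 0 + N.getD k 0) (b := fun k => 2 * M.getD k 0)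
    (fun k => by have := L.getD_le_of_forall_le hL k; have := N.getD_le_of_forall_le hN k; omega)
    (fun k => by have := M.getD_le_of_forall_le hM k; omega)
    (by push_cast; simp only [add_mul, sum_add_distrib, mul_assoc, ← mul_sum]; exact h)
  refine sum_congr rfl fun k hk => ?_
  have := hdigits k (mem_range.mp hk)
  have := L.getD_le_of_forall_le hL k
  have := M.getD_le_of_forall_le hM k
  have := N.getD_le_of_forall_le hN k
  congr 2
  omega

/-- Each row of the grid, evaluated in base 3/2, is a 3-free set of rational numbers. -/
theorem row_three_free (i : ℕ) :
    ¬ ∃ p q r : ℕ,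
      val32 (G i p) < val32 (G i q) ∧ val32 (G i q) < val32 (G i r) ∧
      val32 (G i p) + val32 (G i r) = 2 * val32 (G i q) := by
  rintro ⟨p, q, r, hpq, hqr, hsum⟩
  simp only [val32_G, val32_binRep] at hpq hqr hsum
  have hbits (j : ℕ) : ∀ d ∈ Nat.digits 2 j, d ≤ 1 := fun d hd =>
    Nat.lt_succ_iff.mp (Nat.digits_lt_base one_lt_two hd)
  have hpr := ofDigits_three_halves_eq_of_add_eq_two_mul (hbits p) (hbits q) (hbits r)
    (by linarith)
  linarith
end
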